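/- arXiv:1802.08049 — 10 statements merged into one kernel-verified Lean document; each statement's English description precedes it below -/
import Mathlib

section
/- Let B be the Minkowski bilinear form on ℝ⁴ defined by B(v,w) = −v₀w₀ − v₁w₁ − v₂w₂ + v₃w₃ (signature −−−+). Let v₁, v₂, v₃, v₄ ∈ ℝ⁴ be nonzero vectors with B(vᵢ,vᵢ) = 0 for each i, and suppose that vᵢ and vⱼ are linearly independent whenever i ≠ j. Then there exist nonzero real numbers λ₁, λ₂, λ₃, λ₄ and a triple (r,s,t) ∈ Δ such that the Gram matrix [B(λᵢvᵢ, λⱼvⱼ)]ᵢⱼ equals G(r,s,t); in particular the rescaled vectors have a doubly stochastic Gram matrix. -/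
/-- The Minkowski bilinear form of signature `−−−+` on `ℝ⁴`. -/
noncomputable def B (v w : Fin 4 → ℝ) : ℝ :=
  -(v 0 * w 0) - v 1 * w 1 - v 2 * w 2 + v 3 * w 3

/-- The candidate doubly stochastic Gram matrix `G(r,s,t)`. -/
def G (r s t : ℝ) : Matrix (Fin 4) (Fin 4) ℝ :=
  !![0, r, s, t; r, 0, t, s; s, t, 0, r; t, s, r, 0]

lemma B_smul (a b : ℝ) (x y : Fin 4 → ℝ) : B (a • x) (b • y) = a * b * B x y := by
  simp only [B, Pi.smul_apply, smul_eq_mul]; ring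

lemma B_comm (x y : Fin 4 → ℝ) : B x y = B y x := by
  simp only [B]; ring

lemma w_ne (x : Fin 4 → ℝ) (hx : x ≠ 0) (h : B x x = 0) : x 3 ≠ 0 := by
  intro h3
  apply hx
  simp only [B, h3] at h
  have e0 : x 0 = 0 := by nlinarith [sq_nonneg (x 0), sq_nonneg (x 1), sq_nonneg (x 2)]
  have e1 : x 1 = 0 := by nlinarith [sq_nonneg (x 0), sq_nonneg (x 1), sq_nonneg (x 2)]
  have e2 : x 2 = 0 := by nlinarith [sq_nonneg (x 0), sq_nonneg (x 1), sq_nonneg (x 2)]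
  funext k
  fin_cases k <;> simpa using by first | exact e0 | exact e1 | exact e2 | exact h3

lemma Bpos (x y : Fin 4 → ℝ) (hx : B x x = 0) (hy : B y y = 0)
    (hy3 : y 3 ≠ 0) (hind : LinearIndependent ℝ ![x, y]) :
    0 < B x y * (x 3 * y 3) := by
  rcases lt_or_ge 0 (B x y * (x 3 * y 3)) with h | h
  · exact h
  exfalso
  have h0 : (y 3 * x 0 - x 3 * y 0)^2 + (y 3 * x 1 - x 3 * y 1)^2
      + (y 3 * x 2 - x 3 * y 2)^2 ≤ 0 := by
    simp only [B] at hx hy h; nlinarith [h, hx, hy]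
  have e0 : y 3 * x 0 - x 3 * y 0 = 0 := by
    nlinarith [sq_nonneg (y 3 * x 1 - x 3 * y 1), sq_nonneg (y 3 * x 2 - x 3 * y 2),
      sq_nonneg (y 3 * x 0 - x 3 * y 0)]
  have e1 : y 3 * x 1 - x 3 * y 1 = 0 := by
    nlinarith [sq_nonneg (y 3 * x 1 - x 3 * y 1), sq_nonneg (y 3 * x 2 - x 3 * y 2),
      sq_nonneg (y 3 * x 0 - x 3 * y 0)]
  have e2 : y 3 * x 2 - x 3 * y 2 = 0 := by
    nlinarith [sq_nonneg (y 3 * x 1 - x 3 * y 1), sq_nonneg (y 3 * x 2 - x 3 * y 2),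
      sq_nonneg (y 3 * x 0 - x 3 * y 0)]
  have := (LinearIndependent.pair_iff.mp hind) (y 3) (-(x 3)) ?_
  · exact hy3 this.1
  · funext k
    fin_cases k <;> simp [Pi.smul_apply] <;>
      first
        | linarith [e0] | linarith [e1] | linarith [e2] | ring

set_option maxHeartbeats 1600000 in
/-- Four pairwise linearly independent isotropic vectors in Minkowski space admit
rescalings whose Gram matrix is the doubly stochastic matrix `G(r,s,t)` with
`(r,s,t) ∈ Δ`. -/
theorem exists_doubly_stochastic_gram
    (v : Fin 4 → (Fin 4 → ℝ))
    (hv : ∀ i, v i ≠ 0)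
    (hiso : ∀ i, B (v i) (v i) = 0)
    (hindep : ∀ i j, i ≠ j → LinearIndependent ℝ ![v i, v j]) :
    ∃ lam : Fin 4 → ℝ, (∀ i, lam i ≠ 0) ∧
      ∃ r s t : ℝ,
        (r + s + t = 1 ∧ r ≤ s + t ∧ s ≤ t + r ∧ t ≤ r + s) ∧
        ∀ i j, B (lam i • v i) (lam j • v j) = G r s t i j := by
  have hw : ∀ i, v i 3 ≠ 0 := fun i => w_ne _ (hv i) (hiso i)
  set g : Fin 4 → Fin 4 → ℝ := fun i j => B (v i) (v j) / (v i 3 * v j 3) with hg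
  have hgpos : ∀ i j, i ≠ j → 0 < g i j := by
    intro i j hij
    have h := Bpos (v i) (v j) (hiso i) (hiso j) (hw j) (hindep i j hij)
    show 0 < B (v i) (v j) / (v i 3 * v j 3)
    rcases lt_or_gt_of_ne (mul_ne_zero (hw i) (hw j)) with hc | hc
    · exact div_pos_iff.mpr (Or.inr ⟨by nlinarith, hc⟩)
    · exact div_pos_iff.mpr (Or.inl ⟨by nlinarith, hc⟩)
  have hxs : ∀ i, v i 0 ^ 2 + v i 1 ^ 2 + v i 2 ^ 2 = v i 3 ^ 2 := by
    intro i; have := hiso i; simp only [B] at this; nlinarith [this]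
  have hgsym : ∀ i j, g i j = g j i := by
    intro i j
    simp only [hg]
    rw [mul_comm, B_comm]
  have hgnn : ∀ i j, 0 ≤ g i j := by
    intro i j
    rcases eq_or_ne i j with rfl | hij
    · simp [hg, hiso i]
    · exact (hgpos i j hij).le
  set q : Fin 4 → Fin 4 → ℝ := fun i j => Real.sqrt (g i j) with hq
  have hqsym : ∀ i j, q i j = q j i := by
    intro i j; simp only [hq]; rw [hgsym i j]
  have hqpos : ∀ i j, i ≠ j → 0 < q i j := by
    intro i j hij; exact Real.sqrt_pos.mpr (hgpos i j hij)
  have hq2 : ∀ i j, q i j ^ 2 = g i j := by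
    intro i j; exact Real.sq_sqrt (hgnn i j)
  set x : Fin 4 → EuclideanSpace ℝ (Fin 3) :=
    fun i => (WithLp.equiv 2 (Fin 3 → ℝ)).symm ![v i 0 / v i 3, v i 1 / v i 3, v i 2 / v i 3]
    with hx
  have hdist : ∀ i j, dist (x i) (x j) = Real.sqrt 2 * q i j := by
    intro i j
    rw [EuclideanSpace.dist_eq]
    have hc : v i 3 * v j 3 ≠ 0 := mul_ne_zero (hw i) (hw j)
    have poly : (v i 0 * v j 3 - v i 3 * v j 0)^2 + (v i 1 * v j 3 - v i 3 * v j 1)^2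
        + (v i 2 * v j 3 - v i 3 * v j 2)^2 = 2 * B (v i) (v j) * (v i 3 * v j 3) := by
      simp only [B]
      linear_combination (v j 3 ^ 2) * hxs i + (v i 3 ^ 2) * hxs j
    have hsum : ∑ k : Fin 3, dist (x i k) (x j k) ^ 2 = 2 * g i j := by
      simp only [hx, WithLp.equiv_symm_apply, PiLp.toLp_apply, Fin.sum_univ_three, Real.dist_eq, sq_abs]
      simp only [Matrix.cons_val_zero, Matrix.cons_val_one, Matrix.head_cons,
        Matrix.cons_val_two, Matrix.tail_cons]
      rw [hg]
      simp only [div_sub_div _ _ (hw i) (hw j), div_pow, ← add_div, poly]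
      field_simp
    rw [hsum, hq, ← Real.sqrt_mul (by norm_num : (0:ℝ) ≤ 2)]
  have hpt : ∀ i j k l, q i j * q k l ≤ q i k * q j l + q i l * q j k := by
    intro i j k l
    have H := EuclideanGeometry.mul_dist_le_mul_dist_add_mul_dist (x i) (x k) (x j) (x l)
    rw [hdist i j, hdist k l, hdist i k, hdist j l, hdist k j, hdist i l, hqsym k j] at H
    have h2 : Real.sqrt 2 * Real.sqrt 2 = 2 := Real.mul_self_sqrt (by norm_num)
    have e : ∀ a b : ℝ, Real.sqrt 2 * a * (Real.sqrt 2 * b) = 2 * (a * b) := by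
      intro a b
      rw [show Real.sqrt 2 * a * (Real.sqrt 2 * b)
          = Real.sqrt 2 * Real.sqrt 2 * (a * b) by ring, h2]
    rw [e, e, e] at H
    linarith
  -- abbreviations
  have hA : 0 < q 0 1 := hqpos 0 1 (by decide)
  have hB : 0 < q 0 2 := hqpos 0 2 (by decide)
  have hC : 0 < q 0 3 := hqpos 0 3 (by decide)
  have hD : 0 < q 1 2 := hqpos 1 2 (by decide)
  have hE : 0 < q 1 3 := hqpos 1 3 (by decide)
  have hF : 0 < q 2 3 := hqpos 2 3 (by decide)
  set A := q 0 1 with hAd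
  set Bq := q 0 2 with hBd
  set C := q 0 3 with hCd
  set D := q 1 2 with hDd
  set E := q 1 3 with hEd
  set F := q 2 3 with hFd
  set S := A * F + Bq * E + C * D with hSd
  have hS : 0 < S := by positivity
  set r := A * F / S with hrd
  set s := Bq * E / S with hsd
  set t := C * D / S with htd
  -- the rescaled lambdas
  set n0 := D * E * F / (A * Bq * C * S) with hn0d
  set n1 := Bq * C * F / (A * D * E * S) with hn1d
  set n2 := A * C * E / (Bq * D * F * S) with hn2d
  set n3 := A * Bq * D / (C * E * F * S) with hn3d
  have hn0 : 0 < n0 := by rw [hn0d]; positivity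
  have hn1 : 0 < n1 := by rw [hn1d]; positivity
  have hn2 : 0 < n2 := by rw [hn2d]; positivity
  have hn3 : 0 < n3 := by rw [hn3d]; positivity
  set lam : Fin 4 → ℝ := ![Real.sqrt n0 / v 0 3, Real.sqrt n1 / v 1 3,
    Real.sqrt n2 / v 2 3, Real.sqrt n3 / v 3 3] with hlam
  have l0 : lam 0 = Real.sqrt n0 / v 0 3 := by simp [hlam]
  have l1 : lam 1 = Real.sqrt n1 / v 1 3 := by simp [hlam]
  have l2 : lam 2 = Real.sqrt n2 / v 2 3 := by simp [hlam]
  have l3 : lam 3 = Real.sqrt n3 / v 3 3 := by simp [hlam]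
  refine ⟨lam, ?_, r, s, t, ⟨?_, ?_, ?_, ?_⟩, ?_⟩
  · intro i
    fin_cases i
    · show lam 0 ≠ 0
      rw [l0]; exact div_ne_zero (Real.sqrt_pos.mpr hn0).ne' (hw 0)
    · show lam 1 ≠ 0
      rw [l1]; exact div_ne_zero (Real.sqrt_pos.mpr hn1).ne' (hw 1)
    · show lam 2 ≠ 0
      rw [l2]; exact div_ne_zero (Real.sqrt_pos.mpr hn2).ne' (hw 2)
    · show lam 3 ≠ 0
      rw [l3]; exact div_ne_zero (Real.sqrt_pos.mpr hn3).ne' (hw 3)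
  · rw [hrd, hsd, htd, ← add_div, ← add_div, ← hSd, div_self hS.ne']
  · have h1 := hpt 0 1 2 3
    rw [hrd, hsd, htd, ← add_div, div_le_div_iff_of_pos_right hS]
    exact h1
  · have h1 := hpt 0 2 1 3
    rw [hqsym 2 1] at h1
    rw [hsd, htd, hrd, ← add_div, div_le_div_iff_of_pos_right hS]
    linarith
  · have h1 := hpt 0 3 1 2
    rw [hqsym 3 1, hqsym 3 2] at h1
    rw [htd, hrd, hsd, ← add_div, div_le_div_iff_of_pos_right hS]
    linarith
  -- the Gram matrix computation
  have Bg : ∀ i j, B (v i) (v j) = g i j * (v i 3 * v j 3) := by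
    intro i j
    simp only [hg]
    rw [div_mul_cancel₀ _ (mul_ne_zero (hw i) (hw j))]
  have P01 : Real.sqrt n0 * Real.sqrt n1 = F / (A * S) := by
    rw [← Real.sqrt_mul hn0.le,
      show n0 * n1 = (F / (A * S))^2 by
        rw [hn0d, hn1d]; field_simp [hA.ne', hB.ne', hC.ne', hD.ne', hE.ne', hF.ne', hS.ne'],
      Real.sqrt_sq (by positivity)]
  have P02 : Real.sqrt n0 * Real.sqrt n2 = E / (Bq * S) := by
    rw [← Real.sqrt_mul hn0.le,
      show n0 * n2 = (E / (Bq * S))^2 by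
        rw [hn0d, hn2d]; field_simp [hA.ne', hB.ne', hC.ne', hD.ne', hE.ne', hF.ne', hS.ne'],
      Real.sqrt_sq (by positivity)]
  have P03 : Real.sqrt n0 * Real.sqrt n3 = D / (C * S) := by
    rw [← Real.sqrt_mul hn0.le,
      show n0 * n3 = (D / (C * S))^2 by
        rw [hn0d, hn3d]; field_simp [hA.ne', hB.ne', hC.ne', hD.ne', hE.ne', hF.ne', hS.ne'],
      Real.sqrt_sq (by positivity)]
  have P12 : Real.sqrt n1 * Real.sqrt n2 = C / (D * S) := by
    rw [← Real.sqrt_mul hn1.le,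
      show n1 * n2 = (C / (D * S))^2 by
        rw [hn1d, hn2d]; field_simp [hA.ne', hB.ne', hC.ne', hD.ne', hE.ne', hF.ne', hS.ne'],
      Real.sqrt_sq (by positivity)]
  have P13 : Real.sqrt n1 * Real.sqrt n3 = Bq / (E * S) := by
    rw [← Real.sqrt_mul hn1.le,
      show n1 * n3 = (Bq / (E * S))^2 by
        rw [hn1d, hn3d]; field_simp [hA.ne', hB.ne', hC.ne', hD.ne', hE.ne', hF.ne', hS.ne'],
      Real.sqrt_sq (by positivity)]
  have P23 : Real.sqrt n2 * Real.sqrt n3 = A / (F * S) := by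
    rw [← Real.sqrt_mul hn2.le,
      show n2 * n3 = (A / (F * S))^2 by
        rw [hn2d, hn3d]; field_simp [hA.ne', hB.ne', hC.ne', hD.ne', hE.ne', hF.ne', hS.ne'],
      Real.sqrt_sq (by positivity)]
  have ediag : ∀ i, B (lam i • v i) (lam i • v i) = 0 := by
    intro i; rw [B_smul, hiso i, mul_zero]
  have e01 : B (lam 0 • v 0) (lam 1 • v 1) = r := by
    rw [B_smul, l0, l1, Bg 0 1, ← hq2 0 1, ← hAd,
      show Real.sqrt n0 / v 0 3 * (Real.sqrt n1 / v 1 3) * (A ^ 2 * (v 0 3 * v 1 3))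
        = Real.sqrt n0 * Real.sqrt n1 * A ^ 2 by field_simp [hw 0, hw 1],
      P01, hrd]
    field_simp
  have e02 : B (lam 0 • v 0) (lam 2 • v 2) = s := by
    rw [B_smul, l0, l2, Bg 0 2, ← hq2 0 2, ← hBd,
      show Real.sqrt n0 / v 0 3 * (Real.sqrt n2 / v 2 3) * (Bq ^ 2 * (v 0 3 * v 2 3))
        = Real.sqrt n0 * Real.sqrt n2 * Bq ^ 2 by field_simp [hw 0, hw 2],
      P02, hsd]
    field_simp
  have e03 : B (lam 0 • v 0) (lam 3 • v 3) = t := by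
    rw [B_smul, l0, l3, Bg 0 3, ← hq2 0 3, ← hCd,
      show Real.sqrt n0 / v 0 3 * (Real.sqrt n3 / v 3 3) * (C ^ 2 * (v 0 3 * v 3 3))
        = Real.sqrt n0 * Real.sqrt n3 * C ^ 2 by field_simp [hw 0, hw 3],
      P03, htd]
    field_simp
  have e12 : B (lam 1 • v 1) (lam 2 • v 2) = t := by
    rw [B_smul, l1, l2, Bg 1 2, ← hq2 1 2, ← hDd,
      show Real.sqrt n1 / v 1 3 * (Real.sqrt n2 / v 2 3) * (D ^ 2 * (v 1 3 * v 2 3))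
        = Real.sqrt n1 * Real.sqrt n2 * D ^ 2 by field_simp [hw 1, hw 2],
      P12, htd]
    field_simp
  have e13 : B (lam 1 • v 1) (lam 3 • v 3) = s := by
    rw [B_smul, l1, l3, Bg 1 3, ← hq2 1 3, ← hEd,
      show Real.sqrt n1 / v 1 3 * (Real.sqrt n3 / v 3 3) * (E ^ 2 * (v 1 3 * v 3 3))
        = Real.sqrt n1 * Real.sqrt n3 * E ^ 2 by field_simp [hw 1, hw 3],
      P13, hsd]
    field_simp
  have e23 : B (lam 2 • v 2) (lam 3 • v 3) = r := by
    rw [B_smul, l2, l3, Bg 2 3, ← hq2 2 3, ← hFd,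
      show Real.sqrt n2 / v 2 3 * (Real.sqrt n3 / v 3 3) * (F ^ 2 * (v 2 3 * v 3 3))
        = Real.sqrt n2 * Real.sqrt n3 * F ^ 2 by field_simp [hw 2, hw 3],
      P23, hrd]
    field_simp
  intro i j
  fin_cases i <;> fin_cases j <;> simp only [G] <;>
    first
      | simpa using ediag 0
      | simpa using ediag 1
      | simpa using ediag 2
      | simpa using ediag 3
      | simpa using e01
      | simpa using e02
      | simpa using e03
      | simpa using e12
      | simpa using e13
      | simpa using e23
      | simpa using (B_comm _ _).trans e01
      | simpa using (B_comm _ _).trans e02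
      | simpa using (B_comm _ _).trans e03
      | simpa using (B_comm _ _).trans e12
      | simpa using (B_comm _ _).trans e13
      | simpa using (B_comm _ _).trans e23
end

section
/- Let (r,s,t) ∈ Δ and let G := G(r,s,t) (which is doubly stochastic). If D is a 4×4 real diagonal matrix all of whose diagonal entries are nonzero and the matrix D·G·D is doubly stochastic, then D·G·D = G. In other words, the doubly stochastic Gram matrix of a labelled ideal tetrahedron is unique. -/
/-- A square matrix is doubly stochastic if its entries are non-negative and all
row and column sums equal `1`. -/
def DoublyStochastic (A : Matrix (Fin 4) (Fin 4) ℝ) : Prop :=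
  (∀ i j, 0 ≤ A i j) ∧ (∀ i, ∑ j, A i j = 1) ∧ (∀ j, ∑ i, A i j = 1)

lemma key (a b c d r s t : ℝ)
    (hr : 0 ≤ r) (hs : 0 ≤ s) (ht : 0 ≤ t)
    (hsum : r + s + t = 1)
    (h01 : 0 ≤ a*b*r) (h02 : 0 ≤ a*c*s) (h03 : 0 ≤ a*d*t)
    (h12 : 0 ≤ b*c*t) (h13 : 0 ≤ b*d*s)
    (e1 : a*b*r + a*c*s + a*d*t = 1)
    (e2 : a*b*r + b*c*t + b*d*s = 1)
    (e3 : a*c*s + b*c*t + c*d*r = 1)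
    (e4 : a*d*t + b*d*s + c*d*r = 1) :
    a*b*r = r ∧ a*c*s = s ∧ a*d*t = t ∧ b*c*t = t ∧ b*d*s = s ∧ c*d*r = r := by
  have hA : r * (a*b - c*d) = 0 := by linear_combination (e1 + e2 - e3 - e4)/2
  have hB : s * (a*c - b*d) = 0 := by linear_combination (e1 - e2 + e3 - e4)/2
  have hC : t * (a*d - b*c) = 0 := by linear_combination (e1 - e2 - e3 + e4)/2
  rcases hr.lt_or_eq with hr | hr
  · rcases hs.lt_or_eq with hs | hs
    · rcases ht.lt_or_eq with ht | ht
      · -- all positive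
        have hab : a*b = c*d := by
          rcases mul_eq_zero.mp hA with h | h
          · exact absurd h hr.ne'
          · linarith
        have hac : a*c = b*d := by
          rcases mul_eq_zero.mp hB with h | h
          · exact absurd h hs.ne'
          · linarith
        have had : a*d = b*c := by
          rcases mul_eq_zero.mp hC with h | h
          · exact absurd h ht.ne'
          · linarith
        have hx : 0 ≤ a*b := by nlinarith
        have hy : 0 ≤ a*c := by nlinarith
        have hz : 0 ≤ a*d := by nlinarith
        have hxy : a*b = a*c := (sq_eq_sq₀ hx hy).mp (by
          linear_combination (a*b)*hab - (a*c)*hac)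
        have hxz : a*b = a*d := (sq_eq_sq₀ hx hz).mp (by
          linear_combination (a*b)*hab - (a*d)*had)
        have h1 : a*b = 1 := by
          have h2 : a*b*(r+s+t) = 1 := by linear_combination e1 + s*hxy + t*hxz
          rw [hsum, mul_one] at h2; exact h2
        exact ⟨by linear_combination r*h1,
          by linear_combination s*h1 - s*hxy,
          by linear_combination t*h1 - t*hxz,
          by linear_combination t*h1 - t*hxz - t*had,
          by linear_combination s*h1 - s*hxy - s*hac,
          by linear_combination r*h1 - r*hab⟩
      · -- t = 0
        subst ht
        have hab : a*b = c*d := by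
          rcases mul_eq_zero.mp hA with h | h
          · exact absurd h hr.ne'
          · linarith
        have hac : a*c = b*d := by
          rcases mul_eq_zero.mp hB with h | h
          · exact absurd h hs.ne'
          · linarith
        have hx : 0 ≤ a*b := by nlinarith
        have hy : 0 ≤ a*c := by nlinarith
        have hxy : a*b = a*c := (sq_eq_sq₀ hx hy).mp (by
          linear_combination (a*b)*hab - (a*c)*hac)
        have h1 : a*b = 1 := by
          have h2 : a*b*(r+s+0) = 1 := by linear_combination e1 + s*hxy
          rw [hsum, mul_one] at h2; exact h2
        exact ⟨by linear_combination r*h1,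
          by linear_combination s*h1 - s*hxy,
          by ring, by ring,
          by linear_combination s*h1 - s*hxy - s*hac,
          by linear_combination r*h1 - r*hab⟩
    · -- s = 0, r > 0
      subst hs
      rcases ht.lt_or_eq with ht | ht
      · have hab : a*b = c*d := by
          rcases mul_eq_zero.mp hA with h | h
          · exact absurd h hr.ne'
          · linarith
        have had : a*d = b*c := by
          rcases mul_eq_zero.mp hC with h | h
          · exact absurd h ht.ne'
          · linarith
        have hx : 0 ≤ a*b := by nlinarith
        have hz : 0 ≤ a*d := by nlinarith
        have hxz : a*b = a*d := (sq_eq_sq₀ hx hz).mp (by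
          linear_combination (a*b)*hab - (a*d)*had)
        have h1 : a*b = 1 := by
          have h2 : a*b*(r+0+t) = 1 := by linear_combination e1 + t*hxz
          rw [hsum, mul_one] at h2; exact h2
        exact ⟨by linear_combination r*h1, by ring,
          by linear_combination t*h1 - t*hxz,
          by linear_combination t*h1 - t*hxz - t*had,
          by ring,
          by linear_combination r*h1 - r*hab⟩
      · subst ht
        exact ⟨by linarith, by ring, by ring, by ring, by ring, by linarith⟩
  · -- r = 0
    subst hr
    rcases hs.lt_or_eq with hs | hs
    · rcases ht.lt_or_eq with ht | ht
      · have hac : a*c = b*d := by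
          rcases mul_eq_zero.mp hB with h | h
          · exact absurd h hs.ne'
          · linarith
        have had : a*d = b*c := by
          rcases mul_eq_zero.mp hC with h | h
          · exact absurd h ht.ne'
          · linarith
        have hy : 0 ≤ a*c := by nlinarith
        have hz : 0 ≤ a*d := by nlinarith
        have hyz : a*c = a*d := (sq_eq_sq₀ hy hz).mp (by
          linear_combination (a*c)*hac - (a*d)*had)
        have h1 : a*c = 1 := by
          have h2 : a*c*(0+s+t) = 1 := by linear_combination e1 + t*hyz
          rw [hsum, mul_one] at h2; exact h2
        exact ⟨by ring, by linear_combination s*h1,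
          by linear_combination t*h1 - t*hyz,
          by linear_combination t*h1 - t*hyz - t*had,
          by linear_combination s*h1 - s*hac,
          by ring⟩
      · subst ht
        exact ⟨by ring, by linarith, by ring, by ring, by linarith, by ring⟩
    · subst hs
      exact ⟨by ring, by ring, by linarith, by linarith, by ring, by ring⟩

/-- Uniqueness of the doubly stochastic Gram matrix: if `(r,s,t) ∈ Δ`, `D` is a
diagonal matrix with nonzero diagonal entries and `D * G(r,s,t) * D` is doubly
stochastic, then `D * G(r,s,t) * D = G(r,s,t)`. -/
theorem doubly_stochastic_gram_unique
    (r s t : ℝ)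
    (hΔ : r + s + t = 1 ∧ r ≤ s + t ∧ s ≤ t + r ∧ t ≤ r + s)
    (D : Matrix (Fin 4) (Fin 4) ℝ)
    (hD : ∃ e : Fin 4 → ℝ, (∀ i, e i ≠ 0) ∧ D = Matrix.diagonal e)
    (hds : DoublyStochastic (D * G r s t * D)) :
    D * G r s t * D = G r s t := by
  obtain ⟨hsum, h1, h2, h3⟩ := hΔ
  have hr : 0 ≤ r := by linarith
  have hs : 0 ≤ s := by linarith
  have ht : 0 ≤ t := by linarith
  obtain ⟨e, -, rfl⟩ := hD
  obtain ⟨hnn, hrow, -⟩ := hds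
  have hent : ∀ i j, (Matrix.diagonal e * G r s t * Matrix.diagonal e) i j
      = e i * G r s t i j * e j := by
    intro i j; simp [Matrix.diagonal_mul, Matrix.mul_diagonal]
  have E : ∀ i, e i * G r s t i 0 * e 0 + e i * G r s t i 1 * e 1
      + e i * G r s t i 2 * e 2 + e i * G r s t i 3 * e 3 = 1 := by
    intro i
    have := hrow i
    rw [Fin.sum_univ_four, hent, hent, hent, hent] at this
    linarith
  have E0 := E 0; have E1 := E 1; have E2 := E 2; have E3 := E 3
  simp [G] at E0 E1 E2 E3
  have h01 := hnn 0 1; have h02 := hnn 0 2; have h03 := hnn 0 3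
  have h12 := hnn 1 2; have h13 := hnn 1 3
  rw [hent] at h01 h02 h03 h12 h13
  simp [G] at h01 h02 h03 h12 h13
  obtain ⟨k1, k2, k3, k4, k5, k6⟩ := key (e 0) (e 1) (e 2) (e 3) r s t hr hs ht hsum
    (by nlinarith [h01]) (by nlinarith [h02]) (by nlinarith [h03])
    (by nlinarith [h12]) (by nlinarith [h13])
    (by linear_combination E0) (by linear_combination E1)
    (by linear_combination E2) (by linear_combination E3)
  ext i j
  rw [hent]
  fin_cases i <;> fin_cases j <;> simp [G] <;>
    first
      | ring1
      | (show e 0 * r * e 1 = r; linear_combination k1)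
      | (show e 0 * s * e 2 = s; linear_combination k2)
      | (show e 0 * t * e 3 = t; linear_combination k3)
      | (show e 1 * r * e 0 = r; linear_combination k1)
      | (show e 1 * t * e 2 = t; linear_combination k4)
      | (show e 1 * s * e 3 = s; linear_combination k5)
      | (show e 2 * s * e 0 = s; linear_combination k2)
      | (show e 2 * t * e 1 = t; linear_combination k4)
      | (show e 2 * r * e 3 = r; linear_combination k6)
      | (show e 3 * t * e 0 = t; linear_combination k3)
      | (show e 3 * s * e 1 = s; linear_combination k5)
      | (show e 3 * r * e 2 = r; linear_combination k6)
end

section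
/- For all real numbers r, s, t, the matrix G(r,s,t) satisfies det G(r,s,t) = −(r+s+t)(−r+s+t)(r−s+t)(r+s−t) and per G(r,s,t) = (r²+s²+t²)², where per denotes the permanent. -/
set_option maxHeartbeats 4000000

/-- The permanent of a `4 × 4` real matrix. -/
noncomputable def per (A : Matrix (Fin 4) (Fin 4) ℝ) : ℝ :=
  ∑ σ : Equiv.Perm (Fin 4), ∏ i, A i (σ i)

/-- Determinant and permanent of `G(r,s,t)`. -/
theorem det_per_G (r s t : ℝ) :
    (G r s t).det = -((r + s + t) * (-r + s + t) * (r - s + t) * (r + s - t)) ∧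
    per (G r s t) = (r ^ 2 + s ^ 2 + t ^ 2) ^ 2 := by
  constructor
  · simp (config := { decide := true }) [G, Matrix.det_succ_row_zero, Fin.sum_univ_succ,
      Fin.succAbove, show (Fin.castSucc 2 : Fin 4) = 2 by decide,
      show (if (1:Fin 4) < Fin.succ 2 then (1:Fin 4) else 2) = 1 by decide]
    ring
  · rw [per, ← Equiv.Perm.decomposeFin.symm.sum_comp]
    simp (config := { decide := true }) only [Fintype.sum_prod_type,
      ← Equiv.Perm.decomposeFin.symm.sum_comp,
      Fin.prod_univ_four, Fin.sum_univ_succ, Fin.sum_univ_zero,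
      show ((1:Fin 4)) = Fin.succ 0 from rfl, show ((2:Fin 4)) = Fin.succ 1 from rfl,
      show ((3:Fin 4)) = Fin.succ 2 from rfl,
      show ((1:Fin 3)) = Fin.succ 0 from rfl, show ((2:Fin 3)) = Fin.succ 1 from rfl,
      show ((1:Fin 2)) = Fin.succ 0 from rfl,
      Equiv.Perm.decomposeFin_symm_apply_zero,
      Equiv.Perm.decomposeFin_symm_apply_succ, Equiv.swap_apply_def,
      G, Matrix.cons_val', Matrix.cons_val_zero, Matrix.cons_val_succ,
      Matrix.of_apply, Matrix.cons_val_fin_one, Matrix.empty_val',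
      Equiv.Perm.one_apply, if_true, if_false,
      Finset.sum_const, Finset.card_univ, Fintype.card_perm, Nat.factorial, Fintype.card_fin, Nat.factorial_zero, Nat.cast_one,
      smul_eq_mul, one_mul, mul_one]
    ring
end

section
/- (Seidel's first conjecture, strong form.) Let (r,s,t) ∈ Δ and (r',s',t') ∈ Δ. If det G(r,s,t) = det G(r',s',t') and per G(r,s,t) = per G(r',s',t'), then (r',s',t') is a permutation of (r,s,t), i.e. the multisets {r,s,t} and {r',s',t'} coincide. Hence the determinant and the permanent of the doubly stochastic Gram matrix determine a labelled ideal tetrahedron up to the action of the symmetric group on (r,s,t). -/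
open Polynomial

lemma perm_sum_aux {n : ℕ} (f : Equiv.Perm (Fin (n + 1)) → ℝ) :
    ∑ σ : Equiv.Perm (Fin (n + 1)), f σ
      = ∑ p : Fin (n + 1) × Equiv.Perm (Fin n), f (Equiv.Perm.decomposeFin.symm p) :=
  (Equiv.sum_comp _ f).symm

lemma det_G_aux (r s t : ℝ) :
    (G r s t).det = (r+s+t)*(r-s-t)*(-r+s-t)*(-r-s+t) := by
  simp [Matrix.det_succ_row_zero, Fin.sum_univ_succ, G]
  norm_num [Fin.succAbove, Fin.castSucc, Fin.castAdd, Fin.castLE, Fin.lt_def]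
  simp only [Matrix.cons_val_two, Matrix.tail_cons, Matrix.head_cons]
  ring

lemma per_G_aux (r s t : ℝ) : per (G r s t) = (r^2+s^2+t^2)^2 := by
  rw [per, perm_sum_aux, Fintype.sum_prod_type]
  simp only [perm_sum_aux, Fintype.sum_prod_type]
  simp [Fin.sum_univ_succ, Fin.prod_univ_succ,
    Equiv.Perm.decomposeFin_symm_apply_zero, Equiv.Perm.decomposeFin_symm_apply_succ,
    Equiv.swap_apply_left, Equiv.swap_apply_right, Equiv.swap_apply_of_ne_of_ne, G]
  norm_num [Equiv.swap_apply_def, Fin.ext_iff]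
  ring

lemma cubic_roots_aux (r s t r' s' t' : ℝ)
    (h1 : r + s + t = r' + s' + t')
    (h2 : r*s + s*t + t*r = r'*s' + s'*t' + t'*r')
    (h3 : r*s*t = r'*s'*t') :
    ({r, s, t} : Multiset ℝ) = ({r', s', t'} : Multiset ℝ) := by
  have hpoly : ((X : ℝ[X]) - C r) * (X - C s) * (X - C t)
      = (X - C r') * (X - C s') * (X - C t') := by
    apply Polynomial.funext
    intro x
    simp only [eval_mul, eval_sub, eval_X, eval_C]
    linear_combination (-(x^2))*h1 + x*h2 + (-1)*h3
  have hr : (((X : ℝ[X]) - C r) * (X - C s) * (X - C t)).roots = {r, s, t} := by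
    rw [Polynomial.roots_mul (mul_ne_zero (mul_ne_zero (X_sub_C_ne_zero r)
        (X_sub_C_ne_zero s)) (X_sub_C_ne_zero t)),
      Polynomial.roots_mul (mul_ne_zero (X_sub_C_ne_zero r) (X_sub_C_ne_zero s)),
      roots_X_sub_C, roots_X_sub_C, roots_X_sub_C]
    rfl
  have hr' : (((X : ℝ[X]) - C r') * (X - C s') * (X - C t')).roots = {r', s', t'} := by
    rw [Polynomial.roots_mul (mul_ne_zero (mul_ne_zero (X_sub_C_ne_zero r')
        (X_sub_C_ne_zero s')) (X_sub_C_ne_zero t')),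
      Polynomial.roots_mul (mul_ne_zero (X_sub_C_ne_zero r') (X_sub_C_ne_zero s')),
      roots_X_sub_C, roots_X_sub_C, roots_X_sub_C]
    rfl
  rw [← hr, ← hr', hpoly]

/-- Seidel's first conjecture, strong form: the determinant and the permanent of
the doubly stochastic Gram matrix determine a labelled ideal tetrahedron up to
permutation of `(r,s,t)`. -/
theorem seidel_first_conjecture
    (r s t r' s' t' : ℝ)
    (hΔ : r + s + t = 1 ∧ r ≤ s + t ∧ s ≤ t + r ∧ t ≤ r + s)
    (hΔ' : r' + s' + t' = 1 ∧ r' ≤ s' + t' ∧ s' ≤ t' + r' ∧ t' ≤ r' + s')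
    (hdet : (G r s t).det = (G r' s' t').det)
    (hper : per (G r s t) = per (G r' s' t')) :
    ({r, s, t} : Multiset ℝ) = ({r', s', t'} : Multiset ℝ) := by
  obtain ⟨hs, -, -, -⟩ := hΔ
  obtain ⟨hs', -, -, -⟩ := hΔ'
  rw [per_G_aux, per_G_aux] at hper
  rw [det_G_aux, det_G_aux] at hdet
  -- sums of squares are equal
  have hq : r^2 + s^2 + t^2 = r'^2 + s'^2 + t'^2 := by
    have hz : ((r^2+s^2+t^2) - (r'^2+s'^2+t'^2)) * ((r^2+s^2+t^2) + (r'^2+s'^2+t'^2)) = 0 := by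
      linear_combination hper
    rcases mul_eq_zero.mp hz with h | h
    · linarith
    · have h1 : (0:ℝ) ≤ r^2+s^2+t^2 := by positivity
      have h2 : (0:ℝ) ≤ r'^2+s'^2+t'^2 := by positivity
      linarith
  have h2 : r*s + s*t + t*r = r'*s' + s'*t' + t'*r' := by
    linear_combination ((r+s+t+1)/2)*hs - ((r'+s'+t'+1)/2)*hs' - (1/2)*hq
  have h3 : r*s*t = r'*s'*t' := by
    linear_combination (1/2)*h2 + (1/8)*hdet
      + (-(r*s*t) + ((r*s+s*t+t*r)/2)*((r+s+t)+1) - (1/8)*((r+s+t)+1)*((r+s+t)^2+1))*hs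
      - (-(r'*s'*t') + ((r'*s'+s'*t'+t'*r')/2)*((r'+s'+t')+1) - (1/8)*((r'+s'+t')+1)*((r'+s'+t')^2+1))*hs'
  exact cubic_roots_aux r s t r' s' t' (by linarith) h2 h3
end

section
/- Let (c,d) ∈ Δ̃₁ with (c,d) ≠ (0,0), and let (α,ω) := φ(c,d). Set κ := (1/3)·arccos( (−27α + 18ω − 7) / (4√2·(3ω−1)^{3/2}) ). Then √(2ω − 2/3)·sin κ = c and √(2ω − 2/3)·cos κ = d. In other words, the map h(α,ω) := √(2ω−2/3)·(sin κ, cos κ) is a left inverse of φ on Δ̃₁ ∖ {(0,0)}. -/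
/-- The map `φ(c,d) = (α,ω)` giving the determinant and (square root of the)
permanent of the doubly stochastic Gram matrix in the coordinates `(c,d)`. -/
noncomputable def phi (p : ℝ × ℝ) : ℝ × ℝ :=
  ((2 * Real.sqrt 3 * p.2 + 1) * (9 * p.1 ^ 2 - (Real.sqrt 3 * p.2 - 1) ^ 2) / 27,
   (3 * p.1 ^ 2 + 3 * p.2 ^ 2 + 2) / 6)

/-- The angle `κ(α,ω)`. -/
noncomputable def kappa (α ω : ℝ) : ℝ :=
  (1 / 3) * Real.arccos ((-27 * α + 18 * ω - 7) /
    (4 * Real.sqrt 2 * (3 * ω - 1) ^ ((3 : ℝ) / 2)))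

/-- The map `h(α,ω) := √(2ω−2/3)·(sin κ, cos κ)` is a left inverse of `φ` on
`Δ̃₁ ∖ {(0,0)}`. -/
theorem h_left_inverse_of_phi (c d : ℝ)
    (h1 : 0 ≤ c) (h2 : Real.sqrt 3 / 3 * c ≤ d)
    (h3 : d ≤ -(Real.sqrt 3) * c + Real.sqrt 3 / 3)
    (hne : (c, d) ≠ (0, 0))
    (α ω : ℝ) (hphi : phi (c, d) = (α, ω)) :
    Real.sqrt (2 * ω - 2 / 3) * Real.sin (kappa α ω) = c ∧
    Real.sqrt (2 * ω - 2 / 3) * Real.cos (kappa α ω) = d := by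
  simp only [phi, Prod.mk.injEq] at hphi
  obtain ⟨hα, hω⟩ := hphi
  subst hα hω
  have hs3 : Real.sqrt 3 ^ 2 = 3 := Real.sq_sqrt (by norm_num)
  have hs3pos : 0 < Real.sqrt 3 := Real.sqrt_pos.mpr (by norm_num)
  -- d > 0
  have hdnn : 0 ≤ d := le_trans (by positivity) h2
  have hd0 : 0 < d := by
    rcases hdnn.lt_or_eq with h | h
    · exact h
    · exfalso
      have hc0 : c = 0 := by nlinarith [h2, hs3pos]
      exact hne (by simp [hc0, h.symm])

  set r : ℝ := Real.sqrt (c ^ 2 + d ^ 2) with hrdef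
  have hr0 : 0 < r := Real.sqrt_pos.mpr (by positivity)
  have hrr : r ^ 2 = c ^ 2 + d ^ 2 := Real.sq_sqrt (by positivity)
  -- d ≤ r and r ≤ 2d
  have hdr : d ≤ r := by
    have := Real.sqrt_le_sqrt (show d ^ 2 ≤ c ^ 2 + d ^ 2 by nlinarith)
    rwa [Real.sqrt_sq hdnn] at this
  have hr2d : r ≤ 2 * d := by
    have hsq := mul_self_le_mul_self (by positivity : (0:ℝ) ≤ Real.sqrt 3 / 3 * c) h2
    have h32 : c ^ 2 ≤ 3 * d ^ 2 := by nlinarith [hsq, hs3]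
    have := Real.sqrt_le_sqrt (show c ^ 2 + d ^ 2 ≤ (2 * d) ^ 2 by nlinarith)
    rwa [Real.sqrt_sq (by linarith)] at this
  set θ : ℝ := Real.arccos (d / r) with hθdef
  have hdrle : d / r ≤ 1 := (div_le_one hr0).mpr hdr
  have hdrge : 1 / 2 ≤ d / r := by
    rw [le_div_iff₀ hr0]; linarith
  have hcos : Real.cos θ = d / r := Real.cos_arccos (by linarith) hdrle
  have hθ0 : 0 ≤ θ := Real.arccos_nonneg _
  have hθle : θ ≤ Real.pi / 3 := by
    have h6 : Real.arcsin (1/2) = Real.pi / 6 := by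
      rw [← Real.sin_pi_div_six]
      exact Real.arcsin_sin (by linarith [Real.pi_pos]) (by linarith [Real.pi_pos])
    have hmono := Real.monotone_arcsin hdrge
    rw [h6] at hmono
    rw [hθdef, Real.arccos_eq_pi_div_two_sub_arcsin]
    linarith
  have hsin : Real.sin θ = c / r := by
    rw [hθdef, Real.sin_arccos]
    have h1' : 1 - (d / r) ^ 2 = (c / r) ^ 2 := by
      field_simp
      nlinarith [hrr]
    rw [h1', Real.sqrt_sq (by positivity)]
  -- the argument of arccos in kappa equals cos (3θ)
  have hnum : -27 * ((2 * Real.sqrt 3 * d + 1) * (9 * c ^ 2 - (Real.sqrt 3 * d - 1) ^ 2) / 27)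
      + 18 * ((3 * c ^ 2 + 3 * d ^ 2 + 2) / 6) - 7
      = 6 * Real.sqrt 3 * (d ^ 3 - 3 * c ^ 2 * d) := by
    linear_combination (2 * Real.sqrt 3 * d ^ 3 - 3 * d ^ 2) * hs3
  have hden : 4 * Real.sqrt 2 * (3 * ((3 * c ^ 2 + 3 * d ^ 2 + 2) / 6) - 1) ^ ((3:ℝ)/2)
      = 6 * Real.sqrt 3 * r ^ 3 := by
    have hb : 3 * ((3 * c ^ 2 + 3 * d ^ 2 + 2) / 6) - 1 = (3/2) * r ^ 2 := by
      rw [hrr]; ring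
    rw [hb]
    have hbnn : (0:ℝ) ≤ (3/2) * r ^ 2 := by positivity
    have haux : ∀ x : ℝ, 0 ≤ x → x ^ ((3:ℝ)/2) = Real.sqrt x ^ 3 := by
      intro x hx
      rw [Real.sqrt_eq_rpow, ← Real.rpow_natCast (x ^ ((1:ℝ)/2)) 3, ← Real.rpow_mul hx]
      norm_num
    rw [haux _ hbnn, Real.sqrt_mul (by norm_num) (r^2), Real.sqrt_sq hr0.le]
    have h2' : Real.sqrt (3/2) ^ 3 = (3/2) * Real.sqrt (3/2) := by
      rw [pow_succ, Real.sq_sqrt (by norm_num : (0:ℝ) ≤ 3/2)]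
    have h3' : Real.sqrt 2 * Real.sqrt (3/2) = Real.sqrt 3 := by
      rw [← Real.sqrt_mul (by norm_num)]
      norm_num
    calc 4 * Real.sqrt 2 * (Real.sqrt (3/2) * r) ^ 3
        = 6 * (Real.sqrt 2 * Real.sqrt (3/2)) * r ^ 3 := by
          rw [mul_pow, h2']; ring
      _ = 6 * Real.sqrt 3 * r ^ 3 := by rw [h3']
  have harg : (-27 * ((2 * Real.sqrt 3 * d + 1) * (9 * c ^ 2 - (Real.sqrt 3 * d - 1) ^ 2) / 27)
      + 18 * ((3 * c ^ 2 + 3 * d ^ 2 + 2) / 6) - 7)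
      / (4 * Real.sqrt 2 * (3 * ((3 * c ^ 2 + 3 * d ^ 2 + 2) / 6) - 1) ^ ((3:ℝ)/2))
      = Real.cos (3 * θ) := by
    rw [hnum, hden, Real.cos_three_mul, hcos]
    field_simp
    linear_combination 3 * hrr
  have hkappa : kappa ((2 * Real.sqrt 3 * d + 1) * (9 * c ^ 2 - (Real.sqrt 3 * d - 1) ^ 2) / 27)
      ((3 * c ^ 2 + 3 * d ^ 2 + 2) / 6) = θ := by
    unfold kappa
    rw [harg, Real.arccos_cos (by linarith) (by linarith)]
    ring
  have hsqrt : Real.sqrt (2 * ((3 * c ^ 2 + 3 * d ^ 2 + 2) / 6) - 2 / 3) = r := by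
    rw [show 2 * ((3 * c ^ 2 + 3 * d ^ 2 + 2) / 6) - 2 / 3 = c ^ 2 + d ^ 2 by ring]
  rw [hkappa, hsqrt, hsin, hcos]
  constructor <;> field_simp
end

section
/- Let (c₀,d₀) lie in the interior of Δ̃₁ (i.e. c₀ > 0, d₀ > (√3/3)·c₀, d₀ < −√3·c₀ + √3/3) and let (α₀,ω₀) := φ(c₀,d₀). Write h = (h₁,h₂) with h(α,ω) := √(2ω−2/3)·(sin κ, cos κ), κ := (1/3)·arccos((−27α+18ω−7)/(4√2·(3ω−1)^{3/2})), and abbreviate c := h₁(α₀,ω₀) = c₀, d := h₂(α₀,ω₀) = d₀. Then the four partial derivatives of h exist at (α₀,ω₀) and: ∂h₁/∂α = √3·d/(2c(3d²−c²)), ∂h₂/∂α = −√3/(2(3d²−c²)), ∂h₁/∂ω = (3d² − 3c² − √3·d)/(3c(3d²−c²)), ∂h₂/∂ω = (6d + √3)/(3(3d²−c²)). -/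
/-- First coordinate of `h`. -/
noncomputable def h₁ (α ω : ℝ) : ℝ :=
  Real.sqrt (2 * ω - 2 / 3) * Real.sin (kappa α ω)

/-- Second coordinate of `h`. -/
noncomputable def h₂ (α ω : ℝ) : ℝ :=
  Real.sqrt (2 * ω - 2 / 3) * Real.cos (kappa α ω)

set_option maxHeartbeats 2000000 in
/-- Lemma 6.3: the partial derivatives of `h = (h₁,h₂)` at an interior point
`(α₀,ω₀) = φ(c₀,d₀)`. -/
theorem partial_derivatives_of_h (c₀ d₀ : ℝ)
    (hc : 0 < c₀) (hd1 : Real.sqrt 3 / 3 * c₀ < d₀)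
    (hd2 : d₀ < -(Real.sqrt 3) * c₀ + Real.sqrt 3 / 3)
    (α₀ ω₀ : ℝ) (hphi : phi (c₀, d₀) = (α₀, ω₀)) :
    h₁ α₀ ω₀ = c₀ ∧ h₂ α₀ ω₀ = d₀ ∧
    HasDerivAt (fun x => h₁ x ω₀)
      (Real.sqrt 3 * d₀ / (2 * c₀ * (3 * d₀ ^ 2 - c₀ ^ 2))) α₀ ∧
    HasDerivAt (fun x => h₂ x ω₀)
      (-(Real.sqrt 3) / (2 * (3 * d₀ ^ 2 - c₀ ^ 2))) α₀ ∧
    HasDerivAt (fun y => h₁ α₀ y)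
      ((3 * d₀ ^ 2 - 3 * c₀ ^ 2 - Real.sqrt 3 * d₀) /
        (3 * c₀ * (3 * d₀ ^ 2 - c₀ ^ 2))) ω₀ ∧
    HasDerivAt (fun y => h₂ α₀ y)
      ((6 * d₀ + Real.sqrt 3) / (3 * (3 * d₀ ^ 2 - c₀ ^ 2))) ω₀ := by
  simp only [phi, Prod.mk.injEq] at hphi
  obtain ⟨hα, hω⟩ := hphi
  have hs3 : Real.sqrt 3 ^ 2 = 3 := Real.sq_sqrt (by norm_num)
  have hs3pos : 0 < Real.sqrt 3 := Real.sqrt_pos.2 (by norm_num)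
  have hd0 : 0 < d₀ := lt_trans (by positivity) hd1
  have hcd : c₀ < Real.sqrt 3 * d₀ := by nlinarith [hd1, hs3, hs3pos]
  have hQ : 0 < 3 * d₀ ^ 2 - c₀ ^ 2 := by nlinarith
  obtain ⟨r, hrdef⟩ : ∃ r, r = Real.sqrt (c₀ ^ 2 + d₀ ^ 2) := ⟨_, rfl⟩
  have hr2 : r ^ 2 = c₀ ^ 2 + d₀ ^ 2 := by
    rw [hrdef]; exact Real.sq_sqrt (by positivity)
  have hrpos : 0 < r := by rw [hrdef]; exact Real.sqrt_pos.2 (by positivity)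
  have hω' : 2 * ω₀ - 2 / 3 = r ^ 2 := by rw [hr2]; linarith
  have hsqr : Real.sqrt (2 * ω₀ - 2 / 3) = r := by
    rw [show 2 * ω₀ - 2 / 3 = c₀ ^ 2 + d₀ ^ 2 by rw [← hr2]; exact hω', ← hrdef]
  have h3ω : 3 * ω₀ - 1 = 3 / 2 * r ^ 2 := by rw [hr2]; linarith
  have h3ωpos : 0 < 3 * ω₀ - 1 := by rw [h3ω]; positivity
  have hs6 : Real.sqrt 6 ^ 2 = 6 := Real.sq_sqrt (by norm_num)
  have hE : (3 * ω₀ - 1) ^ ((1:ℝ)/2) = Real.sqrt 6 * r / 2 := by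
    rw [← Real.sqrt_eq_rpow, h3ω]
    rw [show (3/2 : ℝ) * r ^ 2 = (Real.sqrt 6 * r / 2) ^ 2 by
      rw [div_pow, mul_pow, hs6]; ring]
    exact Real.sqrt_sq (by positivity)
  have hP : (3 * ω₀ - 1) ^ ((3:ℝ)/2) = 3 / 4 * (Real.sqrt 6 * r ^ 3) := by
    rw [show (3:ℝ)/2 = (1/2) * 3 by norm_num, Real.rpow_mul h3ωpos.le]
    rw [show ((3*ω₀-1) ^ ((1:ℝ)/2)) ^ (3:ℝ) = ((3*ω₀-1) ^ ((1:ℝ)/2)) ^ (3:ℕ) by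
      rw [← Real.rpow_natCast ((3*ω₀-1) ^ ((1:ℝ)/2)) 3]; norm_num, hE]
    rw [div_pow, mul_pow]
    rw [show Real.sqrt 6 ^ 3 = Real.sqrt 6 ^ 2 * Real.sqrt 6 by ring, hs6]
    ring
  have h26 : Real.sqrt 2 * Real.sqrt 6 = 2 * Real.sqrt 3 := by
    rw [← Real.sqrt_mul (by norm_num : (0:ℝ) ≤ 2) 6,
      show (2:ℝ)*6 = 2^2*3 by norm_num, Real.sqrt_mul (by positivity) 3,
      Real.sqrt_sq (by norm_num : (0:ℝ) ≤ 2)]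
  have hD : 4 * Real.sqrt 2 * (3 * ω₀ - 1) ^ ((3:ℝ)/2) = 6 * Real.sqrt 3 * r ^ 3 := by
    rw [hP]; linear_combination (3*r^3) * h26
  have hN : -27 * α₀ + 18 * ω₀ - 7 = 6 * Real.sqrt 3 * (d₀ ^ 3 - 3 * d₀ * c₀ ^ 2) := by
    rw [← hα, ← hω]
    linear_combination (2*Real.sqrt 3 *d₀^3 - 3*d₀^2) * hs3
  -- the arccos argument
  obtain ⟨u, hudef⟩ : ∃ u:ℝ, u = (-27 * α₀ + 18 * ω₀ - 7) /
      (4 * Real.sqrt 2 * (3 * ω₀ - 1) ^ ((3:ℝ)/2)) := ⟨_, rfl⟩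
  have hu : u = d₀ * (d₀ ^ 2 - 3 * c₀ ^ 2) / r ^ 3 := by
    rw [hudef, hN, hD]
    rw [div_eq_div_iff (by positivity) (by positivity)]
    ring
  -- trig
  obtain ⟨t, htdef⟩ : ∃ t:ℝ, t = Real.arcsin (c₀ / r) := ⟨_, rfl⟩
  have hcr1 : c₀ / r ≤ 1 := by
    rw [div_le_one hrpos]; nlinarith [hr2, hrpos, hd0]
  have hcrm : -1 ≤ c₀ / r := le_trans (by norm_num) (div_nonneg hc.le hrpos.le)
  have hsin : Real.sin t = c₀ / r := by rw [htdef]; exact Real.sin_arcsin hcrm hcr1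
  have hcos : Real.cos t = d₀ / r := by
    rw [htdef, Real.cos_arcsin]
    rw [show 1 - (c₀ / r) ^ 2 = (d₀ / r) ^ 2 by
      field_simp; linarith [hr2]]
    exact Real.sqrt_sq (by positivity)
  have ht0 : 0 ≤ t := by rw [htdef]; exact Real.arcsin_nonneg.2 (div_nonneg hc.le hrpos.le)
  have hcrlt : c₀ / r < Real.sqrt 3 / 2 := by
    rw [div_lt_div_iff₀ hrpos (by norm_num)]
    have hsq : (c₀ * 2) ^ 2 < (Real.sqrt 3 * r) ^ 2 := by
      have h1 : (Real.sqrt 3 * r) ^ 2 = 3 * (c₀ ^ 2 + d₀ ^ 2) := by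
        rw [mul_pow, hs3, hr2]
      nlinarith [hQ]
    exact lt_of_pow_lt_pow_left₀ 2 (by positivity) hsq
  have htpi : t < Real.pi / 3 := by
    have h1 : Real.arcsin (Real.sqrt 3 / 2) = Real.pi / 3 := by
      rw [← Real.sin_pi_div_three]
      exact Real.arcsin_sin (by linarith [Real.pi_pos]) (by linarith [Real.pi_pos])
    have hs3le2 : Real.sqrt 3 < 2 := by nlinarith [hs3, hs3pos]
    rw [htdef, ← h1]
    exact Real.strictMonoOn_arcsin (Set.mem_Icc.2 ⟨hcrm, hcr1⟩)
      (Set.mem_Icc.2 ⟨by linarith, by linarith⟩) hcrlt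
  have hcos3 : Real.cos (3 * t) = u := by
    rw [Real.cos_three_mul, hcos, hu]
    rw [show d₀ * (d₀ ^ 2 - 3 * c₀ ^ 2) = 4 * d₀ ^ 3 - 3 * d₀ * r ^ 2 by
      rw [hr2]; ring]
    field_simp
  have hk : kappa α₀ ω₀ = t := by
    rw [kappa, ← hudef, ← hcos3, Real.arccos_cos (by linarith) (by linarith [htpi, Real.pi_pos])]
    ring
  have hh1 : h₁ α₀ ω₀ = c₀ := by
    rw [h₁, hsqr, hk, hsin]; field_simp
  have hh2 : h₂ α₀ ω₀ = d₀ := by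
    rw [h₂, hsqr, hk, hcos]; field_simp
  -- u bounds
  have hu2 : u ^ 2 < 1 := by
    rw [hu, div_pow, div_lt_one (by positivity)]
    have h6 : (r ^ 3) ^ 2 = (c₀ ^ 2 + d₀ ^ 2) ^ 3 := by rw [show (r^3)^2 = (r^2)^3 by ring, hr2]
    rw [h6]
    have hposq : 0 < c₀ ^ 2 * (3 * d₀ ^ 2 - c₀ ^ 2) ^ 2 := by positivity
    have hid : (c₀ ^ 2 + d₀ ^ 2) ^ 3 - (d₀ * (d₀ ^ 2 - 3 * c₀ ^ 2)) ^ 2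
        = c₀ ^ 2 * (3 * d₀ ^ 2 - c₀ ^ 2) ^ 2 := by ring
    linarith [hposq, hid]
  have hu1 : u ≠ 1 := by intro h; rw [h] at hu2; norm_num at hu2
  have hum1 : u ≠ -1 := by intro h; rw [h] at hu2; norm_num at hu2
  have hsub : Real.sqrt (1 - u ^ 2) = c₀ * (3 * d₀ ^ 2 - c₀ ^ 2) / r ^ 3 := by
    have key : 1 - u ^ 2 = (c₀ * (3 * d₀ ^ 2 - c₀ ^ 2) / r ^ 3) ^ 2 := by
      rw [hu]
      field_simp
      linear_combination (r ^ 4 + r ^ 2 * (c₀ ^ 2 + d₀ ^ 2) + (c₀ ^ 2 + d₀ ^ 2) ^ 2) * hr2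
    rw [key, Real.sqrt_sq (by positivity)]
  have harccos : HasDerivAt Real.arccos (-(1 / Real.sqrt (1 - u ^ 2))) u :=
    Real.hasDerivAt_arccos hum1 hu1
  rw [hudef] at harccos
  have hkk : (1:ℝ) / 3 * Real.arccos ((-27 * α₀ + 18 * ω₀ - 7) /
      (4 * Real.sqrt 2 * (3 * ω₀ - 1) ^ ((3:ℝ) / 2))) = t := by
    rw [← hudef]
    have := hk; rw [kappa, ← hudef] at this
    exact this
  have hDne : 4 * Real.sqrt 2 * (3 * ω₀ - 1) ^ ((3:ℝ) / 2) ≠ 0 := by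
    rw [hD]; exact ne_of_gt (mul_pos (by positivity) (pow_pos hrpos 3))
  -- α-derivative of h₁
  have dA : HasDerivAt (fun x : ℝ => (-27 * x + 18 * ω₀ - 7) /
      (4 * Real.sqrt 2 * (3 * ω₀ - 1) ^ ((3:ℝ) / 2)))
      (-27 / (4 * Real.sqrt 2 * (3 * ω₀ - 1) ^ ((3:ℝ) / 2))) α₀ := by
    have h2 := (((hasDerivAt_id α₀).const_mul (-27 : ℝ)).add_const (18 * ω₀ - 7)).div_const
      (4 * Real.sqrt 2 * (3 * ω₀ - 1) ^ ((3:ℝ) / 2))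
    have h3 := h2.congr_of_eventuallyEq (Filter.Eventually.of_forall (fun x => by simp only [id_eq]; ring :
      ∀ x : ℝ, (-27 * x + 18 * ω₀ - 7) / (4 * Real.sqrt 2 * (3 * ω₀ - 1) ^ ((3:ℝ) / 2))
        = (-27 * (id x) + (18 * ω₀ - 7)) / (4 * Real.sqrt 2 * (3 * ω₀ - 1) ^ ((3:ℝ) / 2))))
    simpa using h3
  have dArc := harccos.comp α₀ dA
  have dk := dArc.const_mul ((1:ℝ) / 3)
  have dsin := (Real.hasDerivAt_sin _).comp α₀ dk
  have dh1a' := dsin.const_mul (Real.sqrt (2 * ω₀ - 2 / 3))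
  have dh1a : HasDerivAt (fun x => h₁ x ω₀)
      (Real.sqrt 3 * d₀ / (2 * c₀ * (3 * d₀ ^ 2 - c₀ ^ 2))) α₀ := by
    simp only [h₁, kappa]
    convert dh1a' using 1
    · rfl
    · rfl
    dsimp only [Function.comp_apply, Pi.div_apply]
    rw [hsqr]; erw [hkk]; rw [hcos, ← hudef, hsub, hD]
    field_simp
    linear_combination (54 * d₀ ^ 3 * c₀ * r ^ 4 - 18 * d₀ * c₀ ^ 3 * r ^ 4) * hs3 + ((18)*(3 * d₀ ^ 2 - c₀ ^ 2)⁻¹ + (-54)*r ^ 4*c₀*d₀ ^ 3 + (18)*r ^ 4*c₀ ^ 3*d₀) * hs3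
  -- α-derivative of h₂
  have dcos := (Real.hasDerivAt_cos _).comp α₀ dk
  have dh2a' := dcos.const_mul (Real.sqrt (2 * ω₀ - 2 / 3))
  have dh2a : HasDerivAt (fun x => h₂ x ω₀)
      (-(Real.sqrt 3) / (2 * (3 * d₀ ^ 2 - c₀ ^ 2))) α₀ := by
    simp only [h₂, kappa]
    convert dh2a' using 1
    · rfl
    · rfl
    dsimp only [Function.comp_apply, Pi.div_apply]
    rw [hsqr]; erw [hkk]; rw [hsin, ← hudef, hsub, hD]
    field_simp
    linear_combination (18 * c₀ * r ^ 4 * (3 * d₀ ^ 2 - c₀ ^ 2)) * hs3 + ((-18) + (-54)*r ^ 4*c₀*d₀ ^ 2 + (18)*r ^ 4*c₀ ^ 3) * hs3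
  -- ω-derivatives
  have hs2 : Real.sqrt 2 ^ 2 = 2 := Real.sq_sqrt (by norm_num)
  have h6' : Real.sqrt 6 = Real.sqrt 2 * Real.sqrt 3 := by
    rw [show (6:ℝ) = 2 * 3 by norm_num, Real.sqrt_mul (by norm_num : (0:ℝ) ≤ 2) 3]
  have hE' : (3 * ω₀ - 1) ^ ((3:ℝ) / 2 - 1) = Real.sqrt 6 * r / 2 := by
    rw [show (3:ℝ) / 2 - 1 = (1:ℝ)/2 by norm_num, hE]
  have dNf : HasDerivAt (fun y : ℝ => -27 * α₀ + 18 * y - 7) 18 ω₀ := by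
    have h2 := ((hasDerivAt_id ω₀).const_mul (18 : ℝ)).add_const (-27 * α₀ - 7)
    have h3 := h2.congr_of_eventuallyEq (Filter.Eventually.of_forall
      (fun x => by simp only [id_eq]; ring :
      ∀ x : ℝ, -27 * α₀ + 18 * x - 7 = 18 * (id x) + (-27 * α₀ - 7)))
    simpa using h3
  have dlin : HasDerivAt (fun y : ℝ => 3 * y - 1) 3 ω₀ := by
    have h2 := ((hasDerivAt_id ω₀).const_mul (3 : ℝ)).add_const (-1 : ℝ)
    have h3 := h2.congr_of_eventuallyEq (Filter.Eventually.of_forall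
      (fun x => by simp only [id_eq]; ring :
      ∀ x : ℝ, 3 * x - 1 = 3 * (id x) + (-1)))
    simpa using h3
  have dpow := (Real.hasDerivAt_rpow_const (p := (3:ℝ)/2)
    (Or.inr (by norm_num))).comp ω₀ dlin
  have ddf := dpow.const_mul (4 * Real.sqrt 2)
  have du := dNf.div ddf hDne
  have dArcw := harccos.comp ω₀ du
  have dkw := dArcw.const_mul ((1:ℝ) / 3)
  have dsinw := (Real.hasDerivAt_sin _).comp ω₀ dkw
  have dcosw := (Real.hasDerivAt_cos _).comp ω₀ dkw
  have hne23 : 2 * ω₀ - 2 / 3 ≠ 0 := by rw [hω']; positivity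
  have dlin2 : HasDerivAt (fun y : ℝ => 2 * y - 2 / 3) 2 ω₀ := by
    have h2 := ((hasDerivAt_id ω₀).const_mul (2 : ℝ)).add_const (-(2:ℝ) / 3)
    have h3 := h2.congr_of_eventuallyEq (Filter.Eventually.of_forall
      (fun x => by simp only [id_eq]; ring :
      ∀ x : ℝ, 2 * x - 2 / 3 = 2 * (id x) + (-(2:ℝ) / 3)))
    simpa using h3
  have dsq := (Real.hasDerivAt_sqrt hne23).comp ω₀ dlin2
  have dh1w' := dsq.mul dsinw
  have dh2w' := dsq.mul dcosw
  have dh1w : HasDerivAt (fun y => h₁ α₀ y)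
      ((3 * d₀ ^ 2 - 3 * c₀ ^ 2 - Real.sqrt 3 * d₀) /
        (3 * c₀ * (3 * d₀ ^ 2 - c₀ ^ 2))) ω₀ := by
    simp only [h₁, kappa]
    convert dh1w' using 1
    · rfl
    · rfl
    · rfl
    dsimp only [Function.comp_apply, Pi.div_apply]
    rw [hsqr, hkk, hsin, hcos, ← hudef, hsub, hN, hD, hE', h6']
    field_simp
    linear_combination ((-23328)*r^7*c₀^3*d₀^4 + (15552)*r^7*c₀^5*d₀^2 + (-2592)*r^7*c₀^7 + (7776)*r^9*c₀*d₀^4 + (-10368)*r^9*c₀^3*d₀^2 + (2592)*r^9*c₀^5 + (-3888)*Real.sqrt 2 ^ 2*r^7*c₀*d₀^6 + (12960)*Real.sqrt 2 ^ 2*r^7*c₀^3*d₀^4 + (-3888)*Real.sqrt 2 ^ 2*r^7*c₀^5*d₀^2 + (-2592)*Real.sqrt 3 *r^9*c₀*d₀^3 + (864)*Real.sqrt 3 *r^9*c₀^3*d₀) * hs3 + ((-11664)*r^7*c₀*d₀^6 + (38880)*r^7*c₀^3*d₀^4 + (-11664)*r^7*c₀^5*d₀^2) * hs2 + ((23328)*r^7*c₀*d₀^4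 + (-31104)*r^7*c₀^3*d₀^2 + (7776)*r^7*c₀^5) * hr2 + ((-24)*r ^ 2*d₀ + (23328)*r ^ 7*c₀ ^ 3*d₀ ^ 4 + (-15552)*r ^ 7*c₀ ^ 5*d₀ ^ 2 + (2592)*r ^ 7*c₀ ^ 7 + (-7776)*r ^ 9*c₀*d₀ ^ 4 + (10368)*r ^ 9*c₀ ^ 3*d₀ ^ 2 + (-2592)*r ^ 9*c₀ ^ 5 + (3888)*Real.sqrt 2 ^ 2*r ^ 7*c₀*d₀ ^ 6 + (-12960)*Real.sqrt 2 ^ 2*r ^ 7*c₀ ^ 3*d₀ ^ 4 + (3888)*Real.sqrt 2 ^ 2*r ^ 7*c₀ ^ 5*d₀ ^ 2 + (2592)*Real.sqrt 3*r ^ 9*c₀*d₀ ^ 3 + (-864)*Real.sqrt 3*r ^ 9*c₀ ^ 3*d₀) * hs3 + ((11664)*r ^ 7*c₀*d₀ ^ 6 + (-38880)*r ^ 7*c₀ ^ 3*d₀ ^ 4 + (11664)*r ^ 7*c₀ ^ 5*d₀ ^ 2 + (-36)*Real.sqrt 3*d₀ ^ 4 + (108)*Real.sqrt 3*c₀ ^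 2*d₀ ^ 2) * hs2 + ((-23328)*r ^ 7*c₀*d₀ ^ 4 + (31104)*r ^ 7*c₀ ^ 3*d₀ ^ 2 + (-7776)*r ^ 7*c₀ ^ 5 + (72)*Real.sqrt 3*d₀ ^ 2 + (-72)*Real.sqrt 3*c₀ ^ 2) * hr2
  have dh2w : HasDerivAt (fun y => h₂ α₀ y)
      ((6 * d₀ + Real.sqrt 3) / (3 * (3 * d₀ ^ 2 - c₀ ^ 2))) ω₀ := by
    simp only [h₂, kappa]
    convert dh2w' using 1
    · rfl
    · rfl
    · rfl
    dsimp only [Function.comp_apply, Pi.div_apply]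
    rw [hsqr, hkk, hsin, hcos, ← hudef, hsub, hN, hD, hE', h6']
    field_simp
    linear_combination ((-23328)*r^7*c₀*d₀^5 + (15552)*r^7*c₀^3*d₀^3 + (-2592)*r^7*c₀^5*d₀ + (15552)*r^9*c₀*d₀^3 + (-5184)*r^9*c₀^3*d₀ + (3888)*Real.sqrt 2 ^ 2*r^7*c₀*d₀^5 + (-12960)*Real.sqrt 2 ^ 2*r^7*c₀^3*d₀^3 + (3888)*Real.sqrt 2 ^ 2*r^7*c₀^5*d₀ + (2592)*Real.sqrt 3 *r^9*c₀*d₀^2 + (-864)*Real.sqrt 3 *r^9*c₀^3) * hs3 + ((11664)*r^7*c₀*d₀^5 + (-38880)*r^7*c₀^3*d₀^3 + (11664)*r^7*c₀^5*d₀) * hs2 + ((46656)*r^7*c₀*d₀^3 + (-15552)*r^7*c₀^3*d₀) * hr2 + ((24)*r ^ 2*(3 * d₀ ^ 2 - c₀ ^ 2)⁻¹ + (23328)*r ^ 7*c₀*d₀ ^ 5 + (-15552)*r ^ 7*c₀ ^ 3*d₀ ^ 3 + (2592)*r ^ 7*c₀ ^ 5*d₀ + (-15552)*r ^ 9*c₀*d₀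 ^ 3 + (5184)*r ^ 9*c₀ ^ 3*d₀ + (-3888)*Real.sqrt 2 ^ 2*r ^ 7*c₀*d₀ ^ 5 + (12960)*Real.sqrt 2 ^ 2*r ^ 7*c₀ ^ 3*d₀ ^ 3 + (-3888)*Real.sqrt 2 ^ 2*r ^ 7*c₀ ^ 5*d₀ + (-2592)*Real.sqrt 3*r ^ 9*c₀*d₀ ^ 2 + (864)*Real.sqrt 3*r ^ 9*c₀ ^ 3) * hs3 + ((-11664)*r ^ 7*c₀*d₀ ^ 5 + (38880)*r ^ 7*c₀ ^ 3*d₀ ^ 3 + (-11664)*r ^ 7*c₀ ^ 5*d₀ + (36)*Real.sqrt 3*d₀ ^ 3*(3 * d₀ ^ 2 - c₀ ^ 2)⁻¹ + (-108)*Real.sqrt 3*c₀ ^ 2*d₀*(3 * d₀ ^ 2 - c₀ ^ 2)⁻¹) * hs2 + ((-46656)*r ^ 7*c₀*d₀ ^ 3 + (15552)*r ^ 7*c₀ ^ 3*d₀ + (144)*Real.sqrt 3*d₀*(3 * d₀ ^ 2 - c₀ ^ 2)⁻¹) * hr2 + ((72)*Real.sqrt 3*d₀) * (inv_mul_cancel₀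 hQ.ne')
  exact ⟨hh1, hh2, dh1a, dh2a, dh1w, dh2w⟩
end

section
/- Let a, b be real numbers with a > 1 and 0 < b < 1. Then (a+b)·(a−1)·log(a+b) − a·(a+b−1)·log a > 0. -/
/-- The key inequality (6.9): for `a > 1` and `0 < b < 1`,
`(a+b)(a−1)log(a+b) − a(a+b−1)log a > 0`. -/
theorem key_inequality (a b : ℝ) (ha : 1 < a) (hb0 : 0 < b) (hb1 : b < 1) :
    0 < (a + b) * (a - 1) * Real.log (a + b) - a * (a + b - 1) * Real.log a := by
  set f : ℝ → ℝ := fun t => t * Real.log t / (t - 1) with hf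
  have hderiv : ∀ t ∈ Set.Ioi (1:ℝ), HasDerivAt f ((t - 1 - Real.log t) / (t-1)^2) t := by
    intro t ht
    have ht1 : (1:ℝ) < t := ht
    have h1 : HasDerivAt (fun t : ℝ => t * Real.log t) (Real.log t + 1) t := by
      have := (hasDerivAt_id t).mul (Real.hasDerivAt_log (by linarith))
      convert this using 1
      case e'_9 => rw [id, mul_inv_cancel₀ (by linarith : (0:ℝ) < t).ne']; ring
      all_goals rfl
    have h2 : HasDerivAt (fun t : ℝ => t - 1) 1 t := (hasDerivAt_id t).sub_const 1
    have h3 := h1.div h2 (by intro h; linarith [sub_eq_zero.mp h] : t - 1 ≠ 0)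
    convert h3 using 1
    case e'_9 => ring
    all_goals rfl
  have hmono : StrictMonoOn f (Set.Ioi 1) := by
    apply strictMonoOn_of_deriv_pos (convex_Ioi 1)
    · exact fun t ht => (hderiv t ht).continuousAt.continuousWithinAt
    · intro t ht
      rw [interior_Ioi] at ht
      rw [(hderiv t ht).deriv]
      have ht1 : (1:ℝ) < t := ht
      have h1 : Real.log t < t - 1 :=
        Real.log_lt_sub_one_of_pos (by linarith) (ne_of_gt ht1)
      exact div_pos (by linarith) (pow_pos (by linarith) 2)
  have hlt : f a < f (a + b) :=
    hmono (Set.mem_Ioi.mpr ha) (Set.mem_Ioi.mpr (by linarith)) (by linarith)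
  have ha1 : (0:ℝ) < a - 1 := by linarith
  have hab1 : (0:ℝ) < a + b - 1 := by linarith
  simp only [hf] at hlt
  rw [div_lt_div_iff₀ ha1 hab1] at hlt
  nlinarith [hlt]
end

section
/- Let a, b be real numbers with a > 1 and 0 < b < 1. Then (a+b)·(a−1)·(2a − b² + 2b − 1)·log(a+b) − a·(a+b−1)·(2a − b² − 1)·log a > 0. -/
/-- Inequality (6.8), reformulated: for `a > 1` and `0 < b < 1`,
`(a+b)(a−1)(2a−b²+2b−1)log(a+b) − a(a+b−1)(2a−b²−1)log a > 0`. -/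
theorem key_inequality' (a b : ℝ) (ha : 1 < a) (hb0 : 0 < b) (hb1 : b < 1) :
    0 < (a + b) * (a - 1) * (2 * a - b ^ 2 + 2 * b - 1) * Real.log (a + b) -
      a * (a + b - 1) * (2 * a - b ^ 2 - 1) * Real.log a := by
  have ha0 : (0:ℝ) < a := lt_trans one_pos ha
  have hab0 : (0:ℝ) < a + b := by linarith
  have hE : 0 < 2 * a - b ^ 2 + 2 * b - 1 := by nlinarith [mul_pos hb0 (sub_pos.mpr hb1)]
  have hC1pos : 0 < (a + b) * (a - 1) * (2 * a - b ^ 2 + 2 * b - 1) :=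
    mul_pos (mul_pos hab0 (by linarith)) hE
  have hloga : 0 < Real.log a := Real.log_pos ha
  have hle : Real.log a ≤ a - 1 := Real.log_le_sub_one_of_pos ha0
  -- log (a+b) ≥ log a + b/(a+b)
  have hdiv : Real.log a - Real.log (a + b) ≤ a / (a + b) - 1 := by
    have h := Real.log_le_sub_one_of_pos (show 0 < a / (a + b) by positivity)
    rwa [Real.log_div (ne_of_gt ha0) (ne_of_gt hab0)] at h
  have hfrac : a / (a + b) - 1 = -(b / (a + b)) := by field_simp; ring
  have hgap : b / (a + b) ≤ Real.log (a + b) - Real.log a := by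
    rw [hfrac] at hdiv; linarith
  -- key lower bound
  have hlow : (a + b) * (a - 1) * (2 * a - b ^ 2 + 2 * b - 1) * (b / (a + b))
      = b * (a - 1) * (2 * a - b ^ 2 + 2 * b - 1) := by
    field_simp
  have hmain : ((a + b) * (a - 1) * (2 * a - b ^ 2 + 2 * b - 1)
        - a * (a + b - 1) * (2 * a - b ^ 2 - 1)) * Real.log a
        + b * (a - 1) * (2 * a - b ^ 2 + 2 * b - 1)
      ≤ (a + b) * (a - 1) * (2 * a - b ^ 2 + 2 * b - 1) * Real.log (a + b) -
        a * (a + b - 1) * (2 * a - b ^ 2 - 1) * Real.log a := by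
    have := mul_le_mul_of_nonneg_left hgap (le_of_lt hC1pos)
    rw [hlow] at this
    nlinarith [this]
  set D := (a + b) * (a - 1) * (2 * a - b ^ 2 + 2 * b - 1)
        - a * (a + b - 1) * (2 * a - b ^ 2 - 1) with hD
  have hQ : 0 < D + b * (2 * a - b ^ 2 + 2 * b - 1) := by
    rw [hD]
    nlinarith [sq_nonneg (a - 1), sq_nonneg (1 - b), sq_nonneg b, mul_pos hb0 (sub_pos.mpr ha),
      mul_pos (sub_pos.mpr ha) (sub_pos.mpr hb1), sq_nonneg (a - b), sq_nonneg (a + b - 1)]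
  rcases le_or_gt 0 D with hD0 | hD0
  · have : 0 < b * (a - 1) * (2 * a - b ^ 2 + 2 * b - 1) := by nlinarith
    nlinarith [mul_nonneg hD0 (le_of_lt hloga)]
  · have h1 : D * Real.log a ≥ D * (a - 1) :=
      mul_le_mul_of_nonpos_left hle (le_of_lt hD0)
    have h2 : 0 < (a - 1) * (D + b * (2 * a - b ^ 2 + 2 * b - 1)) :=
      mul_pos (by linarith) hQ
    have h3 : (a - 1) * (D + b * (2 * a - b ^ 2 + 2 * b - 1))
        = D * (a - 1) + b * (a - 1) * (2 * a - b ^ 2 + 2 * b - 1) := by ring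
    linarith [h1, h2, hmain, h3]
end

section
/- Let M be a symmetric 4×4 real matrix with vanishing diagonal, non-negative entries, and all row sums equal to 1 (i.e. M ∈ Z₄). Then det M ≥ −1/27, and det M = −1/27 if and only if M = (1/3)(J₄ − I₄). Thus (1/3)(J₄ − I₄) is the unique matrix in Z₄ at which the determinant attains its minimum. -/
lemma cube_bound (x y z : ℝ) (hx : x ≤ 1) (hy : y ≤ 1) (hz : z ≤ 1) (h : x+y+z = 1) :
    x*y*z ≤ 1/27 := by
  have h4 : (x+y+z)^3 = 1 := by rw [h]; norm_num
  rcases lt_or_ge x 0 with h1 | h1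
  · nlinarith [mul_nonneg (show (0:ℝ) ≤ y by linarith) (show (0:ℝ) ≤ z by linarith), h1.le]
  rcases lt_or_ge y 0 with h2 | h2
  · nlinarith [mul_nonneg h1 (show (0:ℝ) ≤ z by linarith), h2.le]
  rcases lt_or_ge z 0 with h3 | h3
  · nlinarith [mul_nonneg h1 h2, h3.le]
  nlinarith [h4, mul_nonneg h1 (sq_nonneg (x-y)), mul_nonneg h1 (sq_nonneg (x-z)),
    mul_nonneg h2 (sq_nonneg (y-x)), mul_nonneg h2 (sq_nonneg (y-z)),
    mul_nonneg h3 (sq_nonneg (z-x)), mul_nonneg h3 (sq_nonneg (z-y)),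
    mul_nonneg h3 (sq_nonneg (x-y)), mul_nonneg h1 (sq_nonneg (y-z)),
    mul_nonneg h2 (sq_nonneg (x-z))]

lemma cube_eq (x y z : ℝ) (hx : x ≤ 1) (hy : y ≤ 1) (hz : z ≤ 1) (h : x+y+z = 1)
    (he : x*y*z = 1/27) : x = 1/3 ∧ y = 1/3 ∧ z = 1/3 := by
  have h1 : 0 < x := by
    by_contra h1; push_neg at h1
    nlinarith [mul_nonneg (neg_nonneg.2 h1) (mul_nonneg (show (0:ℝ) ≤ y by linarith)
      (show (0:ℝ) ≤ z by linarith))]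
  have h2 : 0 < y := by
    by_contra h2; push_neg at h2
    rcases lt_or_ge z 0 with h3 | h3
    · linarith
    · nlinarith [mul_nonneg (mul_nonneg h1.le (neg_nonneg.2 h2)) h3]
  have h3 : 0 < z := by
    by_contra h3; push_neg at h3
    nlinarith [mul_nonneg (mul_nonneg h1.le h2.le) (neg_nonneg.2 h3)]
  have key : ∀ u v w : ℝ, 0 < u → 0 < v → 0 < w → u+v+w = 1 →
      u*v*w = 1/27 → u = v := by
    intro u v w hu hv hw hs hp
    have hs3 : (u+v+w)^3 = 1 := by rw [hs]; norm_num
    have hz1 : w*(u-v)^2 ≤ 0 := by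
      nlinarith [hs3, mul_nonneg hu.le (sq_nonneg (u-v)), mul_nonneg hu.le (sq_nonneg (u-w)),
        mul_nonneg hv.le (sq_nonneg (v-u)), mul_nonneg hv.le (sq_nonneg (v-w)),
        mul_nonneg hw.le (sq_nonneg (w-u)), mul_nonneg hw.le (sq_nonneg (w-v)),
        mul_nonneg hu.le (sq_nonneg (v-w)), mul_nonneg hv.le (sq_nonneg (u-w))]
    have hsq : (u-v)^2 = 0 := by nlinarith [sq_nonneg (u-v)]
    have := sq_eq_zero_iff.mp hsq
    linarith
  have e1 : x = y := key x y z h1 h2 h3 (by linarith) he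
  have e2 : y = z := key y z x h2 h3 h1 (by linarith) (by linarith [he])
  exact ⟨by linarith, by linarith, by linarith⟩

lemma det4 (M : Matrix (Fin 4) (Fin 4) ℝ) :
    M.det = M 0 0 * (M 1 1 * (M 2 2 * M 3 3 - M 2 3 * M 3 2) - M 1 2 * (M 2 1 * M 3 3 - M 2 3 * M 3 1) + M 1 3 * (M 2 1 * M 3 2 - M 2 2 * M 3 1))
      - M 0 1 * (M 1 0 * (M 2 2 * M 3 3 - M 2 3 * M 3 2) - M 1 2 * (M 2 0 * M 3 3 - M 2 3 * M 3 0) + M 1 3 * (M 2 0 * M 3 2 - M 2 2 * M 3 0))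
      + M 0 2 * (M 1 0 * (M 2 1 * M 3 3 - M 2 3 * M 3 1) - M 1 1 * (M 2 0 * M 3 3 - M 2 3 * M 3 0) + M 1 3 * (M 2 0 * M 3 1 - M 2 1 * M 3 0))
      - M 0 3 * (M 1 0 * (M 2 1 * M 3 2 - M 2 2 * M 3 1) - M 1 1 * (M 2 0 * M 3 2 - M 2 2 * M 3 0) + M 1 2 * (M 2 0 * M 3 1 - M 2 1 * M 3 0)) := by
  simp [Matrix.det_succ_row_zero, Fin.sum_univ_succ,
    show ((2:Fin 3).succ : Fin 4) = 3 from rfl,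
    show Fin.succAbove (1:Fin 4) 2 = 3 from rfl,
    show Fin.succAbove (2:Fin 4) 2 = 3 from rfl,
    show (Fin.castSucc (2:Fin 3) : Fin 4) = 2 from rfl,
    show Fin.succAbove (3:Fin 4) 2 = 2 from rfl]
  ring

/-- The determinant on the set `Z₄` of symmetric doubly stochastic `4 × 4`
matrices with vanishing diagonal attains its minimum `−1/27` exactly at
`(1/3)(J₄ − I₄)`. -/
theorem det_min_on_Z4 (M : Matrix (Fin 4) (Fin 4) ℝ)
    (hsym : M.IsSymm) (hdiag : ∀ i, M i i = 0)
    (hnn : ∀ i j, 0 ≤ M i j) (hrow : ∀ i, ∑ j, M i j = 1) :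
    -(1 / 27) ≤ M.det ∧ (M.det = -(1 / 27) ↔ ∀ i j, i ≠ j → M i j = 1 / 3) := by
  have hs : ∀ i j, M j i = M i j := fun i j => hsym.apply i j
  have r0 := hrow 0; have r1 := hrow 1; have r2 := hrow 2; have r3 := hrow 3
  simp [Fin.sum_univ_four, hdiag] at r0 r1 r2 r3
  rw [hs 0 1] at r1; rw [hs 0 2, hs 1 2] at r2; rw [hs 0 3, hs 1 3, hs 2 3] at r3
  have e12 : M 1 2 = M 0 3 := by linarith
  have e13 : M 1 3 = M 0 2 := by linarith
  have e23 : M 2 3 = M 0 1 := by linarith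
  have hc : M 0 3 = 1 - M 0 1 - M 0 2 := by linarith
  have hdet : M.det = (2*M 0 1 - 1) * (2*M 0 2 - 1) * (2*M 0 3 - 1) := by
    rw [det4 M, hdiag 0, hdiag 1, hdiag 2, hdiag 3, hs 0 1, hs 0 2, hs 0 3,
      hs 1 2, hs 1 3, hs 2 3, e12, e13, e23, hc]
    ring
  have ha1 : 1 - 2*M 0 1 ≤ 1 := by have := hnn 0 1; linarith
  have hb1 : 1 - 2*M 0 2 ≤ 1 := by have := hnn 0 2; linarith
  have hc1 : 1 - 2*M 0 3 ≤ 1 := by have := hnn 0 3; linarith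
  have hsum : (1 - 2*M 0 1) + (1 - 2*M 0 2) + (1 - 2*M 0 3) = 1 := by linarith
  have hbd := cube_bound _ _ _ ha1 hb1 hc1 hsum
  refine ⟨by nlinarith [hbd], ?_, ?_⟩
  · intro hdm
    have heq : (1 - 2*M 0 1) * (1 - 2*M 0 2) * (1 - 2*M 0 3) = 1/27 := by
      nlinarith [hdm]
    obtain ⟨ea, eb, ec⟩ := cube_eq _ _ _ ha1 hb1 hc1 hsum heq
    have m01 : M 0 1 = 1/3 := by linarith
    have m02 : M 0 2 = 1/3 := by linarith
    have m03 : M 0 3 = 1/3 := by linarith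
    have m12 : M 1 2 = 1/3 := by rw [e12, m03]
    have m13 : M 1 3 = 1/3 := by rw [e13, m02]
    have m23 : M 2 3 = 1/3 := by rw [e23, m01]
    have m10 : M 1 0 = 1/3 := by rw [hs 0 1, m01]
    have m20 : M 2 0 = 1/3 := by rw [hs 0 2, m02]
    have m30 : M 3 0 = 1/3 := by rw [hs 0 3, m03]
    have m21 : M 2 1 = 1/3 := by rw [hs 1 2, m12]
    have m31 : M 3 1 = 1/3 := by rw [hs 1 3, m13]
    have m32 : M 3 2 = 1/3 := by rw [hs 2 3, m23]
    intro i j hij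
    fin_cases i <;> fin_cases j <;>
      first
        | exact absurd rfl hij
        | exact m01 | exact m02 | exact m03 | exact m10 | exact m12 | exact m13
        | exact m20 | exact m21 | exact m23 | exact m30 | exact m31 | exact m32
  · intro h
    rw [hdet, h 0 1 (by decide), h 0 2 (by decide), h 0 3 (by decide)]
    norm_num
end

section
/- Let B be the Minkowski bilinear form on ℝ⁴ defined by B(v,w) = −v₀w₀ − v₁w₁ − v₂w₂ + v₃w₃ (signature −−−+). Let v₁, v₂, v₃, v₄ ∈ ℝ⁴ be nonzero vectors with B(vᵢ,vᵢ) = 0 for each i, pairwise linearly independent. Then there exist signs ε₁, ε₂, ε₃, ε₄ ∈ {1, −1} such that B(εᵢvᵢ, εⱼvⱼ) > 0 for all i ≠ j. -/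
lemma third_ne (x : Fin 4 → ℝ) (hx : B x x = 0) (h : x ≠ 0) : x 3 ≠ 0 := by
  intro h3
  simp only [B] at hx
  apply h
  funext i
  fin_cases i <;> simp <;> nlinarith [sq_nonneg (x 0), sq_nonneg (x 1), sq_nonneg (x 2)]

lemma key_s19 (x y : Fin 4 → ℝ) (hx : B x x = 0) (hy : B y y = 0)
    (hx3 : 0 < x 3) (hy3 : 0 < y 3)
    (hind : ∀ c : ℝ, y ≠ c • x) : 0 < B x y := by
  by_contra h
  push_neg at h
  simp only [B] at h hx hy
  have hx' : x 0 * x 0 + x 1 * x 1 + x 2 * x 2 = x 3 * x 3 := by linarith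
  have hy' : y 0 * y 0 + y 1 * y 1 + y 2 * y 2 = y 3 * y 3 := by linarith
  have hS : x 3 * y 3 ≤ x 0 * y 0 + x 1 * y 1 + x 2 * y 2 := by linarith
  have hpos : 0 < x 3 * y 3 := mul_pos hx3 hy3
  have hS2 : (x 3 * y 3) * (x 3 * y 3) ≤
      (x 0 * y 0 + x 1 * y 1 + x 2 * y 2) * (x 0 * y 0 + x 1 * y 1 + x 2 * y 2) :=
    mul_self_le_mul_self hpos.le hS
  have lag : (x 0 * y 1 - x 1 * y 0)^2 + (x 0 * y 2 - x 2 * y 0)^2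
      + (x 1 * y 2 - x 2 * y 1)^2 = (x 3 * y 3) * (x 3 * y 3)
      - (x 0 * y 0 + x 1 * y 1 + x 2 * y 2) * (x 0 * y 0 + x 1 * y 1 + x 2 * y 2) := by
    linear_combination (y 0 * y 0 + y 1 * y 1 + y 2 * y 2) * hx' + (x 3 * x 3) * hy'
  have n1 := sq_nonneg (x 0 * y 1 - x 1 * y 0)
  have n2 := sq_nonneg (x 0 * y 2 - x 2 * y 0)
  have n3 := sq_nonneg (x 1 * y 2 - x 2 * y 1)
  have h01 : x 0 * y 1 - x 1 * y 0 = 0 :=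
    (pow_eq_zero_iff two_ne_zero).mp (by linarith)
  have h02 : x 0 * y 2 - x 2 * y 0 = 0 :=
    (pow_eq_zero_iff two_ne_zero).mp (by linarith)
  have h12 : x 1 * y 2 - x 2 * y 1 = 0 :=
    (pow_eq_zero_iff two_ne_zero).mp (by linarith)
  have hfac : (x 0 * y 0 + x 1 * y 1 + x 2 * y 2 - x 3 * y 3)
      * (x 0 * y 0 + x 1 * y 1 + x 2 * y 2 + x 3 * y 3) = 0 := by
    linear_combination lag - h01 * (x 0 * y 1 - x 1 * y 0) - h02 * (x 0 * y 2 - x 2 * y 0)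
      - h12 * (x 1 * y 2 - x 2 * y 1)
  have hSeq : x 0 * y 0 + x 1 * y 1 + x 2 * y 2 = x 3 * y 3 := by
    rcases mul_eq_zero.mp hfac with h' | h'
    · linarith
    · linarith
  have hc : ∀ i : Fin 4, y i * x 3 = x i * y 3 := by
    have e0 : y 0 * (x 3 * x 3) = x 0 * (x 3 * y 3) := by
      linear_combination (-(y 0)) * hx' + x 0 * hSeq - x 1 * h01 - x 2 * h02
    have e1 : y 1 * (x 3 * x 3) = x 1 * (x 3 * y 3) := by
      linear_combination (-(y 1)) * hx' + x 1 * hSeq + x 0 * h01 - x 2 * h12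
    have e2 : y 2 * (x 3 * x 3) = x 2 * (x 3 * y 3) := by
      linear_combination (-(y 2)) * hx' + x 2 * hSeq + x 0 * h02 + x 1 * h12
    intro i
    have hx3' := hx3.ne'
    fin_cases i
    · show y 0 * x 3 = x 0 * y 3
      exact mul_left_cancel₀ hx3' (by linear_combination e0)
    · show y 1 * x 3 = x 1 * y 3
      exact mul_left_cancel₀ hx3' (by linear_combination e1)
    · show y 2 * x 3 = x 2 * y 3
      exact mul_left_cancel₀ hx3' (by linear_combination e2)
    · show y 3 * x 3 = x 3 * y 3
      ring
  exact hind (y 3 / x 3) (funext fun i => by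
    have hci := hc i
    simp only [Pi.smul_apply, smul_eq_mul]
    field_simp
    linear_combination hci)

/-- Four pairwise linearly independent nonzero isotropic vectors in Minkowski
space admit signs making all pairwise Gram products positive. -/
theorem exists_positive_representatives
    (v : Fin 4 → (Fin 4 → ℝ))
    (hv : ∀ i, v i ≠ 0)
    (hiso : ∀ i, B (v i) (v i) = 0)
    (hindep : ∀ i j, i ≠ j → LinearIndependent ℝ ![v i, v j]) :
    ∃ ε : Fin 4 → ℝ, (∀ i, ε i = 1 ∨ ε i = -1) ∧
      ∀ i j, i ≠ j → 0 < B (ε i • v i) (ε j • v j) := by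
  have h3 : ∀ i, v i 3 ≠ 0 := fun i => third_ne (v i) (hiso i) (hv i)
  refine ⟨fun i => if 0 < v i 3 then 1 else -1, fun i => by dsimp only; split_ifs <;> simp, ?_⟩
  intro i j hij
  set ε : Fin 4 → ℝ := fun i => if 0 < v i 3 then 1 else -1 with hε
  have hεsq : ∀ k, ε k * ε k = 1 := by
    intro k; simp only [hε]; split_ifs <;> norm_num
  have hpos3 : ∀ k, 0 < (ε k • v k) 3 := by
    intro k
    simp only [Pi.smul_apply, smul_eq_mul, hε]
    split_ifs with hk
    · simpa using hk
    · have : v k 3 < 0 := lt_of_le_of_ne (not_lt.mp hk) (h3 k)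
      nlinarith
  have hisoε : ∀ k, B (ε k • v k) (ε k • v k) = 0 := by
    intro k
    have hk := hiso k
    simp only [B, Pi.smul_apply, smul_eq_mul] at hk ⊢
    linear_combination (ε k * ε k) * hk
  apply key_s19 _ _ (hisoε i) (hisoε j) (hpos3 i) (hpos3 j)
  intro c hc
  have hvj : v j = (ε j * (c * ε i)) • v i := by
    funext k
    have hck := congrFun hc k
    simp only [Pi.smul_apply, smul_eq_mul] at hck ⊢
    linear_combination (ε j) * hck - (v j k) * hεsq j
  obtain ⟨hs, ht⟩ := (LinearIndependent.pair_iff.mp (hindep i j hij))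
      (ε j * (c * ε i)) (-1) (by rw [hvj]; module)
  norm_num at ht
end
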